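/- Let β ∈ ℝ \ {μ_1, …, μ_n} satisfy (β − μ_j)·g(β) > 0 for every j = 1, …, n, and define α_j = ((β − μ_j)·g(β))^{−1/2}. Then α_j > 0 and μ_j·α_j² + β·∑_{k ≠ j} α_k² = −1 for every j = 1, …, n. -/

import Mathlib

open Set Finset

/-!
Squaring the definition gives `αₖ² = ((β - μₖ) g(β))⁻¹`. Since `β (β - μₖ)⁻¹ = -β/(μₖ - β)`,
the definition of `g` gives `β ∑ₖ αₖ² = (1 - g(β))/g(β)`, while removing the `j`-th term costs
`(μⱼ - β) αⱼ² = -1/g(β)`; the two add up to `-1`.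
-/

section

variable {ι : Type*} [Fintype ι] (μ : ι → ℝ) (β : ℝ)

lemma mul_sum_inv_sub_mul_eq (G : ℝ) (hG : G = 1 + β * ∑ j, 1 / (μ j - β)) :
    β * ∑ k, ((β - μ k) * G)⁻¹ = (1 - G) * G⁻¹ := by
  have hsum : β * ∑ k, (β - μ k)⁻¹ = 1 - G := by
    rw [hG, sub_add_cancel_left, ← mul_neg, ← sum_neg_distrib]
    congr 1
    refine sum_congr rfl fun k _ => ?_
    rw [one_div, ← inv_neg, neg_sub]
  simp only [mul_inv, ← sum_mul, ← mul_assoc, hsum]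

lemma mul_inv_add_mul_sum_erase_eq_neg_one [DecidableEq ι] (G : ℝ)
    (hG : G = 1 + β * ∑ j, 1 / (μ j - β)) (hG0 : G ≠ 0) (j : ι) (hj : β ≠ μ j) :
    μ j * ((β - μ j) * G)⁻¹ + β * ∑ k ∈ univ.erase j, ((β - μ k) * G)⁻¹ = -1 := by
  have hdiag : (μ j - β) * ((β - μ j) * G)⁻¹ = -G⁻¹ := by
    rw [← neg_sub, mul_inv, neg_mul, ← mul_assoc, mul_inv_cancel₀ (sub_ne_zero.mpr hj),
      one_mul]
  calc μ j * ((β - μ j) * G)⁻¹ + β * ∑ k ∈ univ.erase j, ((β - μ k) * G)⁻¹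
      = (μ j - β) * ((β - μ j) * G)⁻¹ + β * ∑ k, ((β - μ k) * G)⁻¹ := by
        rw [sum_erase_eq_sub (mem_univ j)]; ring
    _ = -1 := by
        rw [hdiag, mul_sum_inv_sub_mul_eq μ β G hG, sub_mul, one_mul, mul_inv_cancel₀ hG0]
        ring

end

theorem synchronized_coefficients_solve (n : ℕ) (μ : Fin n → ℝ)
    (g : ℝ → ℝ)
    (hg : ∀ β : ℝ, (∀ j, β ≠ μ j) → g β = 1 + β * ∑ j, 1 / (μ j - β))
    (β : ℝ)
    (hpos : ∀ j, 0 < (β - μ j) * g β)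
    (α : Fin n → ℝ)
    (hα : ∀ j, α j = (Real.sqrt ((β - μ j) * g β))⁻¹) :
    ∀ j, 0 < α j ∧ μ j * (α j) ^ 2 + β * ∑ k ∈ Finset.univ.erase j, (α k) ^ 2 = -1 := by
  have hβ : ∀ j, β ≠ μ j := fun j h => by simpa [h] using hpos j
  have hαsq : ∀ k, α k ^ 2 = ((β - μ k) * g β)⁻¹ := fun k => by
    rw [hα k, inv_pow, Real.sq_sqrt (hpos k).le]
  intro j
  have hg0 : g β ≠ 0 := fun h => by simpa [h] using hpos j
  refine ⟨hα j ▸ inv_pos.mpr (Real.sqrt_pos.mpr (hpos j)), ?_⟩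
  simp only [hαsq]
  exact mul_inv_add_mul_sum_erase_eq_neg_one μ β (g β) (hg β hβ) hg0 j (hβ j)
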